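/- Given two functions γ, ν : [0,1] → ℝ such that ν is bounded, left-continuous on (0,1], and nonincreasing; γ is bounded, left-continuous on (0,1], and nondecreasing; γ(1) ≤ ν(1); and both are right-continuous at 0, there exists a unique fuzzy number u with [u]^λ = [γ(λ), ν(λ)] for all λ ∈ [0,1]. -/

import Mathlib

open Set Filter Topology

/-- A fuzzy number: a normal, fuzzy-convex, upper semicontinuous function `ℝ → [0,1]`
with compact support closure. -/
structure FuzzyNumber where
  toFun : ℝ → ℝ
  mem_Icc' : ∀ x, toFun x ∈ Set.Icc (0:ℝ) 1
  normal' : ∃ x, toFun x = 1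
  convex' : ∀ x y lam, lam ∈ Set.Icc (0:ℝ) 1 →
      min (toFun x) (toFun y) ≤ toFun (lam * x + (1 - lam) * y)
  usc' : UpperSemicontinuous toFun
  compact' : IsCompact (closure {x | 0 < toFun x})

namespace FuzzyNumber

/-- The `λ`-level set: for `λ ≠ 0` it is `{x | u x ≥ λ}`; for `λ = 0` it is the
closure of the support. -/
def levelSet (u : FuzzyNumber) (lam : ℝ) : Set ℝ :=
  if lam = 0 then closure {x | 0 < u.toFun x} else {x | lam ≤ u.toFun x}

/-- The left endpoint `u⁻(λ)` of the level set. -/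
noncomputable def low (u : FuzzyNumber) (lam : ℝ) : ℝ := sInf (u.levelSet lam)

/-- The right endpoint `u⁺(λ)` of the level set. -/
noncomputable def up (u : FuzzyNumber) (lam : ℝ) : ℝ := sSup (u.levelSet lam)

/-- The supremum metric `d∞` on fuzzy numbers. -/
noncomputable def dSup (u v : FuzzyNumber) : ℝ :=
  ⨆ lam : Set.Icc (0:ℝ) 1,
    max |u.low lam.1 - v.low lam.1| |u.up lam.1 - v.up lam.1|

end FuzzyNumber

/-! The fuzzy number is `u x = sup {λ ∈ [0,1] | x ∈ [γ λ, ν λ]}`. Since the intervals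
`[γ λ, ν λ]` shrink as `λ` grows, `λ ≤ u x` says that `x` lies in every interval below `λ`,
and left-continuity turns this into `x ∈ [γ λ, ν λ]`. So the positive level sets of `u` are the
prescribed closed intervals, which gives upper semicontinuity and fuzzy convexity; right-continuity
at `0` identifies the closure of the support with `[γ 0, ν 0]`. A fuzzy number is determined by
its positive level sets, hence uniqueness. -/

namespace FuzzyNumber

theorem ext {u v : FuzzyNumber} (h : u.toFun = v.toFun) : u = v := by
  cases u
  cases v
  subst h
  rfl

theorem mem_levelSet {u : FuzzyNumber} {lam x : ℝ} (hlam : lam ≠ 0) :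
    x ∈ u.levelSet lam ↔ lam ≤ u.toFun x := by
  simp [levelSet, hlam]

theorem toFun_le_of_levelSet_subset {u v : FuzzyNumber}
    (h : ∀ lam ∈ Ioc (0:ℝ) 1, u.levelSet lam ⊆ v.levelSet lam) (x : ℝ) :
    u.toFun x ≤ v.toFun x := by
  obtain ⟨hu0, hu1⟩ := u.mem_Icc' x
  rcases hu0.eq_or_lt with hx | hx
  · exact hx ▸ (v.mem_Icc' x).1
  · have hxu : x ∈ u.levelSet (u.toFun x) := (mem_levelSet hx.ne').2 le_rfl
    exact (mem_levelSet hx.ne').1 (h _ ⟨hx, hu1⟩ hxu)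

theorem ext_of_levelSet {u v : FuzzyNumber}
    (h : ∀ lam ∈ Ioc (0:ℝ) 1, u.levelSet lam = v.levelSet lam) : u = v :=
  ext <| funext fun x => le_antisymm
    (toFun_le_of_levelSet_subset (fun lam hlam => (h lam hlam).subset) x)
    (toFun_le_of_levelSet_subset (fun lam hlam => (h lam hlam).symm.subset) x)

end FuzzyNumber

section MonotoneExtension

variable {α β : Type*} [LinearOrder α] [TopologicalSpace α] [OrderTopology α] [DenselyOrdered α]
  [LinearOrder β] [TopologicalSpace β] [OrderClosedTopology β] {f : α → β} {a b : α}

theorem MonotoneOn.Icc_of_tendsto_nhdsGT (hab : a < b) (hf : MonotoneOn f (Ioc a b))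
    (ha : Tendsto f (𝓝[>] a) (𝓝 (f a))) : MonotoneOn f (Icc a b) := by
  rw [← Ioc_insert_left hab.le]
  refine hf.insert_of_continuousWithinAt ?_ (ha.mono_left (nhdsWithin_mono _ Ioc_subset_Ioi_self))
  rw [← mem_closure_iff_clusterPt, closure_Ioc hab.ne]
  exact left_mem_Icc.2 hab.le

theorem AntitoneOn.Icc_of_tendsto_nhdsGT (hab : a < b) (hf : AntitoneOn f (Ioc a b))
    (ha : Tendsto f (𝓝[>] a) (𝓝 (f a))) : AntitoneOn f (Icc a b) :=
  MonotoneOn.Icc_of_tendsto_nhdsGT (β := βᵒᵈ) hab hf ha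

end MonotoneExtension

section Superlevel

variable {E : Type*} [TopologicalSpace E] [AddCommGroup E] [Module ℝ E] {f : E → ℝ}

theorem isClosed_and_convex_setOf_le (h0 : ∀ x, 0 ≤ f x) (h1 : ∀ x, f x ≤ 1)
    (h : ∀ r ∈ Ioc (0:ℝ) 1, IsClosed {x | r ≤ f x} ∧ Convex ℝ {x | r ≤ f x}) (r : ℝ) :
    IsClosed {x | r ≤ f x} ∧ Convex ℝ {x | r ≤ f x} := by
  rcases le_or_gt r 0 with hr0 | hr0
  · have huniv : {x | r ≤ f x} = univ := eq_univ_of_forall fun x => hr0.trans (h0 x)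
    rw [huniv]
    exact ⟨isClosed_univ, convex_univ⟩
  rcases le_or_gt r 1 with hr1 | hr1
  · exact h r ⟨hr0, hr1⟩
  · have hempty : {x | r ≤ f x} = ∅ :=
      eq_empty_of_forall_notMem fun x hx => (h1 x).not_gt (hr1.trans_le hx)
    rw [hempty]
    exact ⟨isClosed_empty, convex_empty⟩

end Superlevel

theorem min_le_of_convex_setOf_le {f : ℝ → ℝ} (h : ∀ r, Convex ℝ {x | r ≤ f x}) (x y : ℝ)
    {lam : ℝ} (hlam : lam ∈ Icc (0:ℝ) 1) : min (f x) (f y) ≤ f (lam * x + (1 - lam) * y) := by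
  have hf : QuasiconcaveOn ℝ univ f := convex_univ.quasiconcaveOn_of_convex_ge h
  simpa using (quasiconcaveOn_iff_min_le.1 hf).2 (mem_univ x) (mem_univ y) hlam.1
    (sub_nonneg.2 hlam.2) (add_sub_cancel lam 1)

/-- At points lying in no interval `[γ λ, ν λ]` the value is `sSup ∅ = 0`. -/
noncomputable def endpointMembership (γ ν : ℝ → ℝ) (x : ℝ) : ℝ :=
  sSup {lam ∈ Icc (0:ℝ) 1 | x ∈ Icc (γ lam) (ν lam)}

section EndpointMembership

variable {γ ν : ℝ → ℝ}

theorem endpointMembership_nonneg (x : ℝ) : 0 ≤ endpointMembership γ ν x :=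
  Real.sSup_nonneg fun _ h => h.1.1

theorem endpointMembership_le_one (x : ℝ) : endpointMembership γ ν x ≤ 1 :=
  Real.sSup_le (fun _ h => h.1.2) zero_le_one

theorem le_endpointMembership {lam x : ℝ} (hlam : lam ∈ Icc (0:ℝ) 1)
    (hx : x ∈ Icc (γ lam) (ν lam)) : lam ≤ endpointMembership γ ν x :=
  le_csSup ⟨1, fun _ h => h.1.2⟩ ⟨hlam, hx⟩

theorem exists_lt_of_lt_endpointMembership {μ x : ℝ} (hμ : 0 ≤ μ)
    (h : μ < endpointMembership γ ν x) :
    ∃ lam ∈ Icc (0:ℝ) 1, μ < lam ∧ x ∈ Icc (γ lam) (ν lam) := by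
  have hne : {lam ∈ Icc (0:ℝ) 1 | x ∈ Icc (γ lam) (ν lam)}.Nonempty := by
    rw [nonempty_iff_ne_empty]
    rintro hempty
    rw [endpointMembership, hempty, Real.sSup_empty] at h
    exact hμ.not_gt h
  obtain ⟨lam, ⟨hlam, hx⟩, hμlam⟩ := exists_lt_of_lt_csSup hne h
  exact ⟨lam, hlam, hμlam, hx⟩

theorem le_endpointMembership_iff (hγ : MonotoneOn γ (Ioc 0 1)) (hν : AntitoneOn ν (Ioc 0 1))
    {lam x : ℝ} (hlam : lam ∈ Ioc (0:ℝ) 1) (hγ_lc : Tendsto γ (𝓝[<] lam) (𝓝 (γ lam)))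
    (hν_lc : Tendsto ν (𝓝[<] lam) (𝓝 (ν lam))) :
    lam ≤ endpointMembership γ ν x ↔ x ∈ Icc (γ lam) (ν lam) := by
  refine ⟨fun hx => ?_, le_endpointMembership (Ioc_subset_Icc_self hlam)⟩
  have hbelow : ∀ μ ∈ Ioo 0 lam, x ∈ Icc (γ μ) (ν μ) := by
    intro μ hμ
    obtain ⟨lam', hlam', hμlam', hx'⟩ :=
      exists_lt_of_lt_endpointMembership hμ.1.le (hμ.2.trans_le hx)
    have hμ' : μ ∈ Ioc (0:ℝ) 1 := ⟨hμ.1, hμlam'.le.trans hlam'.2⟩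
    have hlam'' : lam' ∈ Ioc (0:ℝ) 1 := ⟨hμ.1.trans hμlam', hlam'.2⟩
    exact Icc_subset_Icc (hγ hμ' hlam'' hμlam'.le) (hν hμ' hlam'' hμlam'.le) hx'
  have hev : ∀ᶠ μ in 𝓝[<] lam, x ∈ Icc (γ μ) (ν μ) :=
    eventually_of_mem (Ioo_mem_nhdsLT hlam.1) hbelow
  exact ⟨le_of_tendsto hγ_lc (hev.mono fun _ h => h.1),
    ge_of_tendsto hν_lc (hev.mono fun _ h => h.2)⟩

theorem mem_Icc_of_endpointMembership_pos (hγ : MonotoneOn γ (Icc 0 1))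
    (hν : AntitoneOn ν (Icc 0 1)) {x : ℝ} (hx : 0 < endpointMembership γ ν x) :
    x ∈ Icc (γ 0) (ν 0) := by
  obtain ⟨lam, hlam, -, hxlam⟩ := exists_lt_of_lt_endpointMembership le_rfl hx
  have h0 : (0:ℝ) ∈ Icc (0:ℝ) 1 := left_mem_Icc.2 zero_le_one
  exact Icc_subset_Icc (hγ h0 hlam hlam.1) (hν h0 hlam hlam.1) hxlam

theorem closure_setOf_endpointMembership_pos (hγ : MonotoneOn γ (Icc 0 1))
    (hν : AntitoneOn ν (Icc 0 1)) (hle : ∀ lam ∈ Ioc (0:ℝ) 1, γ lam ≤ ν lam)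
    (hγ_rc : Tendsto γ (𝓝[>] 0) (𝓝 (γ 0))) (hν_rc : Tendsto ν (𝓝[>] 0) (𝓝 (ν 0))) :
    closure {x | 0 < endpointMembership γ ν x} = Icc (γ 0) (ν 0) := by
  refine (closure_minimal (fun x hx => mem_Icc_of_endpointMembership_pos hγ hν hx)
    isClosed_Icc).antisymm fun x hx => ?_
  have hclamp : Tendsto (fun μ => max (γ μ) (min x (ν μ))) (𝓝[>] 0) (𝓝 x) := by
    have h := hγ_rc.max ((tendsto_const_nhds (x := x)).min hν_rc)
    rwa [min_eq_left hx.2, max_eq_right hx.1] at h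
  refine mem_closure_of_tendsto hclamp ?_
  filter_upwards [Ioc_mem_nhdsGT zero_lt_one] with μ hμ
  exact hμ.1.trans_le (le_endpointMembership (Ioc_subset_Icc_self hμ)
    ⟨le_max_left _ _, max_le (hle μ hμ) (min_le_right _ _)⟩)

end EndpointMembership

open FuzzyNumber in
theorem fuzzyNumber_of_endpoint_functions_general (γ ν : ℝ → ℝ)
    (hν_lc : ∀ lam ∈ Set.Ioc (0:ℝ) 1,
      Filter.Tendsto ν (nhdsWithin lam (Set.Iio lam)) (nhds (ν lam)))
    (hν_anti : AntitoneOn ν (Set.Ioc (0:ℝ) 1))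
    (hγ_lc : ∀ lam ∈ Set.Ioc (0:ℝ) 1,
      Filter.Tendsto γ (nhdsWithin lam (Set.Iio lam)) (nhds (γ lam)))
    (hγ_mono : MonotoneOn γ (Set.Ioc (0:ℝ) 1))
    (h_le : γ 1 ≤ ν 1)
    (hγ_rc : Filter.Tendsto γ (nhdsWithin 0 (Set.Ioi 0)) (nhds (γ 0)))
    (hν_rc : Filter.Tendsto ν (nhdsWithin 0 (Set.Ioi 0)) (nhds (ν 0))) :
    ∃! u : FuzzyNumber, ∀ lam ∈ Set.Icc (0:ℝ) 1,
      u.levelSet lam = Set.Icc (γ lam) (ν lam) := by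
  have h1 : (1:ℝ) ∈ Ioc (0:ℝ) 1 := right_mem_Ioc.2 zero_lt_one
  have hle : ∀ lam ∈ Ioc (0:ℝ) 1, γ lam ≤ ν lam := fun lam hlam =>
    (hγ_mono hlam h1 hlam.2).trans (h_le.trans (hν_anti hlam h1 hlam.2))
  have hlevel : ∀ lam ∈ Ioc (0:ℝ) 1,
      {x | lam ≤ endpointMembership γ ν x} = Icc (γ lam) (ν lam) := fun lam hlam =>
    Set.ext fun _ =>
      le_endpointMembership_iff hγ_mono hν_anti hlam (hγ_lc lam hlam) (hν_lc lam hlam)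
  have hsuper := isClosed_and_convex_setOf_le endpointMembership_nonneg endpointMembership_le_one
    fun r hr => by rw [hlevel r hr]; exact ⟨isClosed_Icc, convex_Icc _ _⟩
  have hsupp := closure_setOf_endpointMembership_pos (hγ_mono.Icc_of_tendsto_nhdsGT one_pos hγ_rc)
    (hν_anti.Icc_of_tendsto_nhdsGT one_pos hν_rc) hle hγ_rc hν_rc
  let u : FuzzyNumber :=
    { toFun := endpointMembership γ ν
      mem_Icc' := fun x => ⟨endpointMembership_nonneg x, endpointMembership_le_one x⟩
      normal' := ⟨γ 1, (endpointMembership_le_one _).antisymm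
        (le_endpointMembership (Ioc_subset_Icc_self h1) ⟨le_rfl, h_le⟩)⟩
      convex' := fun x y _ hlam => min_le_of_convex_setOf_le (fun r => (hsuper r).2) x y hlam
      usc' := upperSemicontinuous_iff_isClosed_preimage.2 fun r => (hsuper r).1
      compact' := hsupp ▸ isCompact_Icc }
  have hu : ∀ lam ∈ Icc (0:ℝ) 1, u.levelSet lam = Icc (γ lam) (ν lam) := by
    rintro lam ⟨hlam0, hlam1⟩
    rcases hlam0.eq_or_lt with rfl | hlam0
    · simpa [levelSet] using hsupp
    · simpa [levelSet, hlam0.ne'] using hlevel lam ⟨hlam0, hlam1⟩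
  exact ⟨u, hu, fun v hv => ext_of_levelSet fun lam hlam =>
    (hv lam (Ioc_subset_Icc_self hlam)).trans (hu lam (Ioc_subset_Icc_self hlam)).symm⟩

open FuzzyNumber in
/-- Goetschel–Voxman converse: two functions satisfying conditions (i)–(iv) are the
endpoint functions of a unique fuzzy number. -/
theorem fuzzyNumber_of_endpoint_functions (γ ν : ℝ → ℝ)
    (hν_bdd : ∃ M : ℝ, ∀ lam ∈ Set.Icc (0:ℝ) 1, |ν lam| ≤ M)
    (hν_lc : ∀ lam ∈ Set.Ioc (0:ℝ) 1,
      Filter.Tendsto ν (nhdsWithin lam (Set.Iio lam)) (nhds (ν lam)))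
    (hν_anti : AntitoneOn ν (Set.Ioc (0:ℝ) 1))
    (hγ_bdd : ∃ M : ℝ, ∀ lam ∈ Set.Icc (0:ℝ) 1, |γ lam| ≤ M)
    (hγ_lc : ∀ lam ∈ Set.Ioc (0:ℝ) 1,
      Filter.Tendsto γ (nhdsWithin lam (Set.Iio lam)) (nhds (γ lam)))
    (hγ_mono : MonotoneOn γ (Set.Ioc (0:ℝ) 1))
    (h_le : γ 1 ≤ ν 1)
    (hγ_rc : Filter.Tendsto γ (nhdsWithin 0 (Set.Ioi 0)) (nhds (γ 0)))
    (hν_rc : Filter.Tendsto ν (nhdsWithin 0 (Set.Ioi 0)) (nhds (ν 0))) :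
    ∃! u : FuzzyNumber, ∀ lam ∈ Set.Icc (0:ℝ) 1,
      u.levelSet lam = Set.Icc (γ lam) (ν lam) :=
  fuzzyNumber_of_endpoint_functions_general γ ν hν_lc hν_anti hγ_lc hγ_mono h_le hγ_rc hν_rc
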